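/- (Lemma 3.2) Let N be an abelian network with total alphabet A. For all words w, w' ∈ A^*, if |w| = |w'| in ℕ^A, then the state transitions agree: π_w = π_{w'} as maps ℤ^A × Q → ℤ^A × Q. -/

import Mathlib

/-- The letter-count vector `|w| ∈ ℕ^A` of a word `w ∈ A^*`. -/
def lc {A : Type*} [DecidableEq A] (w : List A) : A → ℕ := fun a => w.count a

/-- An abelian-network *data* structure on a directed graph with vertex set `V`, edge set `E`
(with source and target maps, allowing loops and multiple edges), total alphabet
`A = ⊔_v A_v` (the letter `a` belongs to the alphabet of the vertex `loc a`), and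
state space `Q v` for the processor at vertex `v`.  The abelian hypothesis on the
processors is the separate predicate `AbelianNetwork.IsAbelian`. -/
structure AbelianNetwork (V E A : Type*) (Q : V → Type*) [DecidableEq V] [DecidableEq A] where
  /-- source of an edge -/
  src : E → V
  /-- target of an edge -/
  tgt : E → V
  /-- the vertex whose input alphabet contains the letter `a` -/
  loc : A → V
  /-- the (finitely many) outgoing edges of each vertex -/
  outEdges : V → Finset E
  mem_outEdges : ∀ (e : E) (v : V), e ∈ outEdges v ↔ src e = v
  /-- single-letter transition function `T_v(a, ·)` of the processor at `v = loc a` -/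
  trans : (a : A) → Q (loc a) → Q (loc a)
  /-- message-passing function: the word sent along the edge `e` (with `src e = loc a`)
  when the processor at `loc a` processes the letter `a` in state `q` -/
  msg : (e : E) → (a : A) → Q (loc a) → List A
  /-- letters sent along `e` belong to the alphabet of the target of `e` -/
  msg_tgt : ∀ (e : E) (a : A) (q : Q (loc a)), src e = loc a → ∀ b ∈ msg e a q, loc b = tgt e

namespace AbelianNetwork

variable {V E A : Type*} {Q : V → Type*} [DecidableEq V] [DecidableEq A]
variable (N : AbelianNetwork V E A Q)

/-- The map `t_a : Q → Q` updating the `loc a` coordinate by `T_{loc a}(a, ·)` and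
fixing all other coordinates. -/
def tact (a : A) (q : ∀ v, Q v) : ∀ v, Q v :=
  Function.update q (N.loc a) (N.trans a (q (N.loc a)))

/-- `t_w = t_{w_r} ∘ ⋯ ∘ t_{w_1}` for a word `w = w_1 ⋯ w_r`. -/
def tword (w : List A) (q : ∀ v, Q v) : ∀ v, Q v :=
  w.foldl (fun q a => N.tact a q) q

/-- The word sent along the edge `e` when the letters of `w` are processed in order,
starting from the global state `q`.  (Extends the message-passing functions to words.) -/
def msgword (e : E) : List A → (∀ v, Q v) → List A
  | [], _ => []
  | a :: w, q =>
      (if N.src e = N.loc a then N.msg e a (q (N.loc a)) else []) ++ msgword e w (N.tact a q)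

/-- `N(a, q_{loc a}) ∈ ℕ^A`: the vector counting the letters produced when the processor at
`loc a` processes the letter `a`, summed over the outgoing edges of `loc a`. -/
def Nletter (a : A) (q : ∀ v, Q v) : A → ℕ := fun b =>
  ∑ e ∈ N.outEdges (N.loc a), (N.msg e a (q (N.loc a))).count b

/-- `N(w, q) = ∑_i N(w_i, q^{i-1}_{v(i)})` for a word `w = w_1 ⋯ w_r`. -/
def Nword : List A → (∀ v, Q v) → A → ℕ
  | [], _ => fun _ => 0
  | a :: w, q => fun b => N.Nletter a q b + Nword w (N.tact a q) b

/-- The network is *abelian*: permuting a word input to a single processor does not change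
the resulting state and changes each output word only by permuting its letters. -/
def IsAbelian : Prop :=
  ∀ (v : V) (w w' : List A), (∀ a ∈ w, N.loc a = v) → (∀ a ∈ w', N.loc a = v) →
    (w : Multiset A) = (w' : Multiset A) →
    ∀ q : ∀ u, Q u,
      N.tword w q = N.tword w' q ∧
      ∀ e : E, ((N.msgword e w q : Multiset A) = (N.msgword e w' q : Multiset A))

/-- The state transition `π_a(x.q) = (x - 1_a + N(a, q_{loc a})).t_a(q)` of the whole
network, viewed as a single automaton with states `x.q ∈ ℤ^A × Q`. -/
def piLetter (a : A) (s : (A → ℤ) × (∀ v, Q v)) : (A → ℤ) × (∀ v, Q v) :=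
  (fun b => s.1 b - (if b = a then 1 else 0) + (N.Nletter a s.2 b : ℤ), N.tact a s.2)

/-- `π_w = π_{w_r} ∘ ⋯ ∘ π_{w_1}`. -/
def piWord (w : List A) (s : (A → ℤ) × (∀ v, Q v)) : (A → ℤ) × (∀ v, Q v) :=
  w.foldl (fun s a => N.piLetter a s) s

/-- The word `w` is a *legal execution* from `x.q`: each letter is a legal move
(`x_a ≥ 1`) from the state obtained by executing the previous letters. -/
def Legal : List A → ((A → ℤ) × (∀ v, Q v)) → Prop
  | [], _ => True
  | a :: w, s => 1 ≤ s.1 a ∧ Legal w (N.piLetter a s)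

/-- The word `w` is a *complete execution* from `x.q`: after executing `w`,
no letters remain to be processed. -/
def Complete (w : List A) (s : (A → ℤ) × (∀ v, Q v)) : Prop :=
  ∀ a : A, (N.piWord w s).1 a ≤ 0

/-- A canonical word with letter-count vector `u ∈ ℕ^A`. -/
noncomputable def vecWord [Fintype A] (u : A → ℕ) : List A :=
  (Finset.univ : Finset A).toList.flatMap fun a => List.replicate (u a) a

/-- `N(u, q)` for a vector `u ∈ ℕ^A`, defined as `N(w, q)` for a word `w` with `|w| = u`. -/
noncomputable def Nvec [Fintype A] (u : A → ℕ) (q : ∀ v, Q v) : A → ℕ := N.Nword (vecWord u) q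

end AbelianNetwork


/-!
Since `π_w` is a left fold of the letter maps `π_a` and `|w| = |w'|` means that `w'` is a
permutation of `w`, it suffices that any two letter maps commute. For letters at different
vertices this is clear, as they touch different coordinates of the state. For letters `a, b` at
the same vertex `v`, both the state reached and the letters emitted along the edges out of `v`
are, by the abelian property of the processor at `v`, the same for the inputs `ab` and `ba`.
-/

namespace AbelianNetwork

variable {V E A : Type*} {Q : V → Type*} [DecidableEq V] [DecidableEq A]
  (N : AbelianNetwork V E A Q)

theorem tact_comm_of_loc_ne {a b : A} (h : N.loc a ≠ N.loc b) (q : ∀ v, Q v) :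
    N.tact b (N.tact a q) = N.tact a (N.tact b q) := by
  simp only [tact, Function.update_of_ne h, Function.update_of_ne h.symm]
  exact Function.update_comm h _ _ q

theorem Nletter_tact_of_loc_ne {a b : A} (h : N.loc b ≠ N.loc a) (q : ∀ v, Q v) :
    N.Nletter b (N.tact a q) = N.Nletter b q := by
  unfold Nletter
  rw [tact, Function.update_of_ne h]

theorem Nword_eq_sum_count_msgword {v : V} {w : List A} (hw : ∀ a ∈ w, N.loc a = v)
    (q : ∀ v, Q v) (c : A) :
    N.Nword w q c = ∑ e ∈ N.outEdges v, (N.msgword e w q).count c := by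
  induction w generalizing q with
  | nil => simp [Nword, msgword]
  | cons a w ih =>
    obtain rfl : N.loc a = v := hw a List.mem_cons_self
    simp only [Nword]
    rw [ih (fun b hb => hw b (List.mem_cons_of_mem a hb)), Nletter, ← Finset.sum_add_distrib]
    refine Finset.sum_congr rfl fun e he => ?_
    rw [msgword, if_pos ((N.mem_outEdges e _).1 he), List.count_append]

theorem Nword_eq_of_perm (hN : N.IsAbelian) {v : V} {w w' : List A}
    (hw : ∀ a ∈ w, N.loc a = v) (hw' : ∀ a ∈ w', N.loc a = v) (hp : w.Perm w')
    (q : ∀ v, Q v) : N.Nword w q = N.Nword w' q := by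
  funext c
  rw [N.Nword_eq_sum_count_msgword hw, N.Nword_eq_sum_count_msgword hw']
  refine Finset.sum_congr rfl fun e _ => ?_
  rw [← Multiset.coe_count, ← Multiset.coe_count,
    (hN v w w' hw hw' (Multiset.coe_eq_coe.2 hp) q).2 e]

theorem tact_comm (hN : N.IsAbelian) (a b : A) (q : ∀ v, Q v) :
    N.tact b (N.tact a q) = N.tact a (N.tact b q) := by
  by_cases h : N.loc a = N.loc b
  · exact (hN (N.loc a) [a, b] [b, a] (by simp [h]) (by simp [h])
      (Multiset.coe_eq_coe.2 (.swap b a [])) q).1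
  · exact N.tact_comm_of_loc_ne h q

theorem Nletter_add_Nletter_tact_comm (hN : N.IsAbelian) (a b : A) (q : ∀ v, Q v) (c : A) :
    N.Nletter a q c + N.Nletter b (N.tact a q) c =
      N.Nletter b q c + N.Nletter a (N.tact b q) c := by
  by_cases h : N.loc a = N.loc b
  · have hab := N.Nword_eq_of_perm hN (v := N.loc a) (w := [a, b]) (w' := [b, a])
      (by simp [h]) (by simp [h]) (.swap b a []) q
    simpa [Nword] using congrFun hab c
  · rw [N.Nletter_tact_of_loc_ne (Ne.symm h), N.Nletter_tact_of_loc_ne h, add_comm]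

theorem piLetter_comm (hN : N.IsAbelian) (a b : A) (s : (A → ℤ) × (∀ v, Q v)) :
    N.piLetter b (N.piLetter a s) = N.piLetter a (N.piLetter b s) := by
  refine Prod.ext (funext fun c => ?_) (N.tact_comm hN a b s.2)
  have hsum := N.Nletter_add_Nletter_tact_comm hN a b s.2 c
  simp only [piLetter]
  omega

end AbelianNetwork

/-- **Lemma 3.2.** In an abelian network, if `|w| = |w'|` in `ℕ^A`, then the state
transitions agree: `π_w = π_{w'}` as maps `ℤ^A × Q → ℤ^A × Q`. -/
theorem AbelianNetwork.piWord_congr {V E A : Type*} {Q : V → Type*}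
    [DecidableEq V] [DecidableEq A] (N : AbelianNetwork V E A Q) (hN : N.IsAbelian)
    (w w' : List A) (h : lc w = lc w') :
    N.piWord w = N.piWord w' := by
  have hp : w.Perm w' := List.perm_iff_count.2 (congrFun h)
  funext s
  exact hp.foldl_eq' (fun a _ b _ s => N.piLetter_comm hN a b s) s
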